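/- Fix positive real parameters E, I, ρ, m, κ, l, l₀ with 0 < l₀ < l. Then (8ρμ·e^{−μl}/m)·D(μ) − Φ₀(μ) tends to 0 as μ → +∞; equivalently, D(μ) = (m·e^{μl}/(8ρμ))·(Φ₀(μ) + o(1)) as μ → +∞. -/
import Mathlib

/-- Φ₀(μ) = 2 sin(μ(l−l₀)) sin(μl₀) − sin(μl). -/
noncomputable def Phi0 (l l₀ μ : ℝ) : ℝ :=
  2 * Real.sin (μ * (l - l₀)) * Real.sin (μ * l₀) - Real.sin (μ * l)

/-- D(μ) = det ℳ, the left-hand side of the exact frequency equation. -/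
noncomputable def D (E I ρ m κ l l₀ μ : ℝ) : ℝ :=
  m / (4 * μ * ρ) *
      ((Real.cosh (μ * (l - 2 * l₀)) - Real.cosh (μ * l)) * Real.sin (μ * l)
        + (Real.cos (μ * (l - 2 * l₀)) - Real.cos (μ * l)) * Real.sinh (μ * l))
    - Real.sin (μ * l) * Real.sinh (μ * l) / μ ^ 2
    + κ / (4 * E * I * μ ^ 5) *
        ((Real.cosh (μ * l) - Real.cosh (μ * (l - 2 * l₀))) * Real.sin (μ * l)
          - (Real.cos (μ * (l - 2 * l₀)) + Real.cos (μ * l)) * Real.sinh (μ * l))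

/-- The remainder, written in a form where all exponentials decay. -/
noncomputable def Hfun (E I ρ m κ l l₀ μ : ℝ) : ℝ :=
  (Real.exp (-(2 * l₀) * μ) + Real.exp (-(2 * (l - l₀)) * μ) - Real.exp (-(2 * l) * μ))
      * Real.sin (μ * l)
  - Real.exp (-(2 * l) * μ) * (Real.cos (μ * (l - 2 * l₀)) - Real.cos (μ * l))
  - (4 * ρ / (m * μ)) * (Real.sin (μ * l) * (1 - Real.exp (-(2 * l) * μ)))
  + (κ * ρ / (E * I * m * μ ^ 4)) *
      ((1 + Real.exp (-(2 * l) * μ) - Real.exp (-(2 * l₀) * μ)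
          - Real.exp (-(2 * (l - l₀)) * μ)) * Real.sin (μ * l)
        - (Real.cos (μ * (l - 2 * l₀)) + Real.cos (μ * l)) * (1 - Real.exp (-(2 * l) * μ)))

lemma key_identity (E I ρ m κ l l₀ μ : ℝ)
    (hE : E ≠ 0) (hI : I ≠ 0) (hρ : ρ ≠ 0) (hm : m ≠ 0) (hμ : μ ≠ 0) :
    8 * ρ * μ * Real.exp (-(μ * l)) / m * D E I ρ m κ l l₀ μ - Phi0 l l₀ μ
      = Hfun E I ρ m κ l l₀ μ := by
  unfold D Phi0 Hfun
  rw [show μ * (l - 2 * l₀) = μ * (l - l₀) - μ * l₀ by ring,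
      show -(2 * l₀) * μ = -(μ * l₀) + -(μ * l₀) by ring,
      show -(2 * (l - l₀)) * μ = -(μ * (l - l₀)) + -(μ * (l - l₀)) by ring,
      show -(2 * l) * μ = (-(μ * l₀) + -(μ * (l - l₀))) + (-(μ * l₀) + -(μ * (l - l₀))) by ring,
      show μ * l = μ * l₀ + μ * (l - l₀) by ring]
  simp only [Real.cosh_eq, Real.sinh_eq, Real.exp_add, Real.exp_sub, Real.exp_neg,
    Real.cos_add, Real.cos_sub, Real.sin_add, Real.sin_sub, neg_add]
  have hX : Real.exp (μ * l₀) ≠ 0 := Real.exp_ne_zero _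
  have hY : Real.exp (μ * (l - l₀)) ≠ 0 := Real.exp_ne_zero _
  field_simp
  ring

lemma exp_decay (c : ℝ) (hc : 0 < c) :
    Filter.Tendsto (fun μ : ℝ => Real.exp (-c * μ)) Filter.atTop (nhds 0) :=
  Real.tendsto_exp_comp_nhds_zero.2 <|
    (Filter.tendsto_const_mul_atBot_of_neg (neg_neg_iff_pos.2 hc)).2 Filter.tendsto_id

lemma bdd_of_eventually {g : ℝ → ℝ} (C : ℝ) (h : ∀ᶠ μ in Filter.atTop, ‖g μ‖ ≤ C) :
    Filter.IsBoundedUnder (· ≤ ·) Filter.atTop ((‖·‖) ∘ g) :=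
  ⟨C, Filter.eventually_map.2 h⟩

theorem detM_asymptotics (E I ρ m κ l l₀ : ℝ)
    (hE : 0 < E) (hI : 0 < I) (hρ : 0 < ρ) (hm : 0 < m) (hκ : 0 < κ)
    (hl : 0 < l) (hl₀ : 0 < l₀) (hl₀l : l₀ < l) :
    Filter.Tendsto
      (fun μ : ℝ =>
        8 * ρ * μ * Real.exp (-(μ * l)) / m * D E I ρ m κ l l₀ μ - Phi0 l l₀ μ)
      Filter.atTop (nhds 0) := by
  have hH : Filter.Tendsto (fun μ : ℝ => Hfun E I ρ m κ l l₀ μ) Filter.atTop (nhds 0) := by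
    have e1 := exp_decay (2 * l₀) (by linarith)
    have e2 := exp_decay (2 * (l - l₀)) (by linarith)
    have e3 := exp_decay (2 * l) (by linarith)
    have hsin : ∀ᶠ μ : ℝ in Filter.atTop, ‖Real.sin (μ * l)‖ ≤ 1 :=
      Filter.Eventually.of_forall fun μ => by
        simpa using Real.abs_sin_le_one (μ * l)
    have hexple : ∀ᶠ μ : ℝ in Filter.atTop, Real.exp (-(2 * l) * μ) ≤ 1 := by
      filter_upwards [Filter.eventually_ge_atTop (0 : ℝ)] with μ hμ
      exact Real.exp_le_one_iff.2 (by nlinarith)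
    have T1 : Filter.Tendsto
        (fun μ : ℝ => (Real.exp (-(2 * l₀) * μ) + Real.exp (-(2 * (l - l₀)) * μ)
          - Real.exp (-(2 * l) * μ)) * Real.sin (μ * l)) Filter.atTop (nhds 0) := by
      have : Filter.Tendsto (fun μ : ℝ => Real.exp (-(2 * l₀) * μ)
          + Real.exp (-(2 * (l - l₀)) * μ) - Real.exp (-(2 * l) * μ))
          Filter.atTop (nhds 0) := by
        simpa using (e1.add e2).sub e3
      exact this.zero_mul_isBoundedUnder_le (bdd_of_eventually 1 hsin)
    have T2 : Filter.Tendsto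
        (fun μ : ℝ => Real.exp (-(2 * l) * μ)
          * (Real.cos (μ * (l - 2 * l₀)) - Real.cos (μ * l))) Filter.atTop (nhds 0) := by
      refine e3.zero_mul_isBoundedUnder_le (bdd_of_eventually 2 ?_)
      refine Filter.Eventually.of_forall fun μ => ?_
      have := Real.abs_cos_le_one (μ * (l - 2 * l₀))
      have := Real.abs_cos_le_one (μ * l)
      simp only [Real.norm_eq_abs]
      calc |Real.cos (μ * (l - 2 * l₀)) - Real.cos (μ * l)|
          ≤ |Real.cos (μ * (l - 2 * l₀))| + |Real.cos (μ * l)| := abs_sub _ _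
        _ ≤ 2 := by linarith
    have T3 : Filter.Tendsto
        (fun μ : ℝ => (4 * ρ / (m * μ))
          * (Real.sin (μ * l) * (1 - Real.exp (-(2 * l) * μ)))) Filter.atTop (nhds 0) := by
      have hc : Filter.Tendsto (fun μ : ℝ => 4 * ρ / (m * μ)) Filter.atTop (nhds 0) := by
        apply Filter.Tendsto.const_div_atTop
        exact (Filter.tendsto_const_mul_atTop_of_pos hm).2 Filter.tendsto_id
      refine hc.zero_mul_isBoundedUnder_le (bdd_of_eventually 2 ?_)
      filter_upwards [hsin, hexple, Filter.eventually_ge_atTop (0 : ℝ)] with μ h1 h2 h3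
      have hpos : 0 < Real.exp (-(2 * l) * μ) := Real.exp_pos _
      simp only [Real.norm_eq_abs, abs_mul] at *
      have : |1 - Real.exp (-(2 * l) * μ)| ≤ 1 := by
        rw [abs_le]; constructor <;> nlinarith
      nlinarith [abs_nonneg (Real.sin (μ * l)), abs_nonneg (1 - Real.exp (-(2 * l) * μ))]
    have T4 : Filter.Tendsto
        (fun μ : ℝ => (κ * ρ / (E * I * m * μ ^ 4)) *
          ((1 + Real.exp (-(2 * l) * μ) - Real.exp (-(2 * l₀) * μ)
              - Real.exp (-(2 * (l - l₀)) * μ)) * Real.sin (μ * l)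
            - (Real.cos (μ * (l - 2 * l₀)) + Real.cos (μ * l))
              * (1 - Real.exp (-(2 * l) * μ)))) Filter.atTop (nhds 0) := by
      have hc : Filter.Tendsto (fun μ : ℝ => κ * ρ / (E * I * m * μ ^ 4))
          Filter.atTop (nhds 0) := by
        apply Filter.Tendsto.const_div_atTop
        exact (Filter.tendsto_const_mul_atTop_of_pos (by positivity)).2
          (Filter.tendsto_pow_atTop (by norm_num))
      refine hc.zero_mul_isBoundedUnder_le (bdd_of_eventually 6 ?_)
      filter_upwards [hsin, hexple, Filter.eventually_ge_atTop (0 : ℝ)] with μ h1 h2 h3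
      have hp1 : 0 < Real.exp (-(2 * l) * μ) := Real.exp_pos _
      have hp2 : 0 < Real.exp (-(2 * l₀) * μ) := Real.exp_pos _
      have hp3 : 0 < Real.exp (-(2 * (l - l₀)) * μ) := Real.exp_pos _
      have hb2 : Real.exp (-(2 * l₀) * μ) ≤ 1 := Real.exp_le_one_iff.2 (by nlinarith)
      have hb3 : Real.exp (-(2 * (l - l₀)) * μ) ≤ 1 :=
        Real.exp_le_one_iff.2 (by nlinarith)
      have hc1 := Real.abs_cos_le_one (μ * (l - 2 * l₀))
      have hc2 := Real.abs_cos_le_one (μ * l)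
      simp only [Real.norm_eq_abs] at *
      have hA : |1 + Real.exp (-(2 * l) * μ) - Real.exp (-(2 * l₀) * μ)
          - Real.exp (-(2 * (l - l₀)) * μ)| ≤ 2 := by
        rw [abs_le]; constructor <;> nlinarith
      have hB : |1 - Real.exp (-(2 * l) * μ)| ≤ 1 := by
        rw [abs_le]; constructor <;> nlinarith
      have hC : |Real.cos (μ * (l - 2 * l₀)) + Real.cos (μ * l)| ≤ 2 := by
        calc |Real.cos (μ * (l - 2 * l₀)) + Real.cos (μ * l)|
            ≤ |Real.cos (μ * (l - 2 * l₀))| + |Real.cos (μ * l)| := abs_add_le _ _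
          _ ≤ 2 := by linarith
      calc |(1 + Real.exp (-(2 * l) * μ) - Real.exp (-(2 * l₀) * μ)
              - Real.exp (-(2 * (l - l₀)) * μ)) * Real.sin (μ * l)
            - (Real.cos (μ * (l - 2 * l₀)) + Real.cos (μ * l))
              * (1 - Real.exp (-(2 * l) * μ))|
          ≤ |(1 + Real.exp (-(2 * l) * μ) - Real.exp (-(2 * l₀) * μ)
              - Real.exp (-(2 * (l - l₀)) * μ)) * Real.sin (μ * l)|
            + |(Real.cos (μ * (l - 2 * l₀)) + Real.cos (μ * l))
              * (1 - Real.exp (-(2 * l) * μ))| := abs_sub _ _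
        _ ≤ 6 := by
            rw [abs_mul, abs_mul]
            nlinarith [abs_nonneg ((1 + Real.exp (-(2 * l) * μ) - Real.exp (-(2 * l₀) * μ)
              - Real.exp (-(2 * (l - l₀)) * μ))), abs_nonneg (Real.sin (μ * l)),
              abs_nonneg (Real.cos (μ * (l - 2 * l₀)) + Real.cos (μ * l)),
              abs_nonneg (1 - Real.exp (-(2 * l) * μ))]
    have := ((T1.sub T2).sub T3).add T4
    simpa [Hfun, sub_eq_add_neg, add_assoc] using this
  refine hH.congr' ?_
  filter_upwards [Filter.eventually_gt_atTop (0 : ℝ)] with μ hμ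
  exact (key_identity E I ρ m κ l l₀ μ hE.ne' hI.ne' hρ.ne' hm.ne' hμ.ne').symm
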